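/- The expected number of model parameters of node N_j received by node N_i in a round equals d·(1 - (1 - r/(nk-1))^k), and this quantity is a decreasing function of k (for fixed n, d, r). Equivalently, the expected number of parameters NOT received, d·(1 - r/(nk-1))^k, is increasing in k. -/

import Mathlib

/-! Weighted AM-GM with weights `k/(k+1)` and `1/(k+1)` bounds `a ^ k` by the `(k+1)`-st power
of the mean `(k a + 1)/(k + 1)`. For `a = 1 - r/(n k - 1)` that mean is at most
`1 - r/(n (k+1) - 1)`, because `k (n (k+1) - 1) ≥ (k+1)(n k - 1)`. -/

theorem pow_le_mean_pow_succ {a : ℝ} (ha : 0 ≤ a) (k : ℕ) :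
    a ^ k ≤ ((k * a + 1) / (k + 1)) ^ (k + 1) := by
  have hk : (0 : ℝ) < k + 1 := by positivity
  have hmean : a ^ ((k : ℝ) / (k + 1)) ≤ (k * a + 1) / (k + 1) :=
    calc a ^ ((k : ℝ) / (k + 1)) = a ^ ((k : ℝ) / (k + 1)) * 1 ^ (1 / ((k : ℝ) + 1)) := by
          rw [Real.one_rpow, mul_one]
      _ ≤ (k : ℝ) / (k + 1) * a + 1 / ((k : ℝ) + 1) * 1 :=
          Real.geom_mean_le_arith_mean2_weighted (by positivity) (by positivity) ha zero_le_one
            (by field_simp)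
      _ = (k * a + 1) / (k + 1) := by ring
  calc a ^ k = (a ^ ((k : ℝ) / (k + 1))) ^ ((k + 1 : ℕ) : ℝ) := by
        rw [← Real.rpow_mul ha, Nat.cast_succ, div_mul_cancel₀ _ hk.ne', Real.rpow_natCast]
    _ ≤ ((k * a + 1) / (k + 1)) ^ ((k + 1 : ℕ) : ℝ) :=
        Real.rpow_le_rpow (by positivity) hmean (by positivity)
    _ = ((k * a + 1) / (k + 1)) ^ (k + 1) := Real.rpow_natCast _ _

theorem mean_le_one_sub_div_succ {n r x : ℝ} (hr : 0 ≤ r) (hx : 0 ≤ x) (hnx : 0 < n * x - 1) :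
    (x * (1 - r / (n * x - 1)) + 1) / (x + 1) ≤ 1 - r / (n * (x + 1) - 1) := by
  have hn : 0 < n := by nlinarith
  have hnx' : 0 < n * (x + 1) - 1 := by nlinarith
  have hdiv : r / (n * (x + 1) - 1) ≤ x * r / ((x + 1) * (n * x - 1)) := by
    rw [div_le_div_iff₀ hnx' (by positivity)]
    nlinarith
  calc (x * (1 - r / (n * x - 1)) + 1) / (x + 1) = 1 - x * r / ((x + 1) * (n * x - 1)) := by
        field_simp
        ring
    _ ≤ 1 - r / (n * (x + 1) - 1) := by linarith

theorem one_sub_div_pow_le_pow_succ {n r : ℝ} {k : ℕ} (hr : 0 ≤ r) (hrk : r < n * k - 1) :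
    (1 - r / (n * k - 1)) ^ k ≤ (1 - r / (n * (k + 1) - 1)) ^ (k + 1) := by
  have ha : 0 ≤ 1 - r / (n * k - 1) := by
    rw [sub_nonneg, div_le_one (by linarith)]
    exact hrk.le
  calc (1 - r / (n * k - 1)) ^ k ≤ ((k * (1 - r / (n * k - 1)) + 1) / (k + 1)) ^ (k + 1) :=
        pow_le_mean_pow_succ ha k
    _ ≤ (1 - r / (n * (k + 1) - 1)) ^ (k + 1) := by
        gcongr
        exact mean_le_one_sub_div_succ hr k.cast_nonneg (by linarith)

theorem stmt_3_general (n r d : ℝ) (hr : 1 ≤ r) (hd : 0 < d) :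
    ∀ k : ℕ, 1 ≤ k → r ≤ n * k - 2 →
      (d * (1 - (1 - r / (n * (k + 1 : ℕ) - 1)) ^ ((k : ℕ) + 1)) ≤
        d * (1 - (1 - r / (n * k - 1)) ^ k)) ∧
      (d * (1 - r / (n * k - 1)) ^ k ≤
        d * (1 - r / (n * (k + 1 : ℕ) - 1)) ^ ((k : ℕ) + 1)) := by
  intro k _ hrk
  have hpow := one_sub_div_pow_le_pow_succ (n := n) (r := r) (k := k) (by linarith) (by linarith)
  push_cast
  exact ⟨mul_le_mul_of_nonneg_left (sub_le_sub_left hpow 1) hd.le,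
    mul_le_mul_of_nonneg_left hpow hd.le⟩

/-- The expected number of model parameters of `N_j` received by `N_i` in a round,
`d * (1 - (1 - r/(n*k-1))^k)`, is a decreasing function of `k` (for fixed `n`, `d`, `r`);
equivalently, the expected number of parameters NOT received, `d * (1 - r/(n*k-1))^k`,
is increasing in `k`. Here `d > 0`, `n > 1`, `1 ≤ r ≤ n*k - 2`. -/
theorem stmt_3 (n r d : ℝ) (hn : 1 < n) (hr : 1 ≤ r) (hd : 0 < d) :
    ∀ k : ℕ, 1 ≤ k → r ≤ n * k - 2 →
      (d * (1 - (1 - r / (n * (k + 1 : ℕ) - 1)) ^ ((k : ℕ) + 1)) ≤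
        d * (1 - (1 - r / (n * k - 1)) ^ k)) ∧
      (d * (1 - r / (n * k - 1)) ^ k ≤
        d * (1 - r / (n * (k + 1 : ℕ) - 1)) ^ ((k : ℕ) + 1)) :=
  stmt_3_general n r d hr hd
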